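/- arXiv:2603.13002 — 9 statements merged into one kernel-verified Lean document; each statement's English description precedes it below -/
import Mathlib

section
/- In a quasi-abelian category, universal monomorphisms are stable under pullback: if f : A ⟶ B is a universal monomorphism and δ : Z ⟶ B is an arbitrary morphism, then in the pullback square of f along δ the projection P ⟶ Z is again a universal monomorphism. -/
/-!
Let `P` be the pullback of `f` along `δ`, with projections `q : P ⟶ A` and `p : P ⟶ Z`.
The graph `(q, p) : P ⟶ A ⊞ Z` is a kernel of `(f, -δ) : A ⊞ Z ⟶ B`, so its pushouts are monos
by stability of kernels under pushout, while `f ⊞ 𝟙 : A ⊞ Z ⟶ B ⊞ Z` is a pushout of `f`, hence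
again a universal mono. Since `p ≫ (δ, 𝟙) = (q, p) ≫ (f ⊞ 𝟙)`, pushing out along `g : P ⟶ X`
yields a mono `X ⟶ pushout (q, p) g ⟶ W`, the second map being a pushout of `f ⊞ 𝟙`, through
which `pushout.inr p g` factors.
-/

open CategoryTheory CategoryTheory.Limits

universe v u

/-- A monomorphism `f` is a *universal monomorphism* if it is stable under pushout:
for every morphism `g : A ⟶ X`, the induced morphism `X ⟶ Y` into the pushout `Y`
of `f` and `g` is again a monomorphism. -/
def IsUniversalMono {C : Type u} [Category.{v} C] [HasPushouts C]
    {A B : C} (f : A ⟶ B) : Prop :=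
  Mono f ∧ ∀ ⦃X : C⦄ (g : A ⟶ X), Mono (pushout.inr f g)

section

variable {C : Type u} [Category.{v} C] [HasPushouts C]

theorem IsUniversalMono.mono_of_isPushout {A B X Y : C} {f : A ⟶ B} (hf : IsUniversalMono f)
    {g : A ⟶ X} {inl : B ⟶ Y} {inr : X ⟶ Y} (h : IsPushout f g inl inr) : Mono inr := by
  have := hf.2 g
  rw [← h.inr_isoPushout_inv]
  infer_instance

theorem IsUniversalMono.of_isPushout {A B X Y : C} {f : A ⟶ B} (hf : IsUniversalMono f)
    {g : A ⟶ X} {inl : B ⟶ Y} {inr : X ⟶ Y} (h : IsPushout f g inl inr) :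
    IsUniversalMono inr :=
  ⟨hf.mono_of_isPushout h, fun _ k =>
    hf.mono_of_isPushout (h.flip.paste_horiz (IsPushout.of_hasPushout inr k).flip).flip⟩

theorem mono_pushout_inr_of_comp_eq {P Z M N X : C} {p : P ⟶ Z} {s : Z ⟶ N} {m : P ⟶ M}
    {u : M ⟶ N} (w : p ≫ s = m ≫ u) {g : P ⟶ X} (hm : Mono (pushout.inr m g))
    (hu : IsUniversalMono u) : Mono (pushout.inr p g) := by
  have := hu.2 (pushout.inl m g)
  have w' : p ≫ s ≫ pushout.inl u (pushout.inl m g) =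
      g ≫ pushout.inr m g ≫ pushout.inr u (pushout.inl m g) := by
    rw [reassoc_of% w, pushout.condition, reassoc_of% pushout.condition]
  have : Mono (pushout.inr p g ≫ pushout.desc _ _ w') := by
    rw [pushout.inr_desc]
    infer_instance
  exact mono_of_mono _ (pushout.desc _ _ w')

end

section

variable {C : Type u} [Category.{v} C]

theorem isPushout_inl_biprod_map_id [HasZeroMorphisms C] {A B : C} (f : A ⟶ B) (Z : C)
    [HasBinaryBiproduct A Z] [HasBinaryBiproduct B Z] :
    IsPushout f (biprod.inl : A ⟶ A ⊞ Z) biprod.inl (biprod.map f (𝟙 Z)) := by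
  refine IsPushout.of_isColimit' ⟨by simp⟩ <| PushoutCocone.IsColimit.mk _
    (fun s => biprod.desc s.inl (biprod.inr ≫ s.inr)) (fun s => by simp) (fun s => ?_)
    (fun s n hl hr => ?_)
  · apply biprod.hom_ext' <;> simp [s.condition]
  · apply biprod.hom_ext'
    · simpa using hl
    · simpa using congr(biprod.inr ≫ $hr)

variable [Preadditive C] {A B Z : C} (f : A ⟶ B) (δ : Z ⟶ B) [HasPullback f δ]
  [HasBinaryBiproduct A Z]

theorem biprod_lift_pullback_comp_desc_neg :
    biprod.lift (pullback.fst f δ) (pullback.snd f δ) ≫ biprod.desc f (-δ) = 0 := by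
  rw [biprod.lift_desc, Preadditive.comp_neg, pullback.condition, add_neg_cancel]

noncomputable def isLimitBiprodLiftPullback :
    IsLimit (KernelFork.ofι _ (biprod_lift_pullback_comp_desc_neg f δ)) :=
  KernelFork.IsLimit.ofι _ _
    (fun t ht => pullback.lift (t ≫ biprod.fst) (t ≫ biprod.snd) <| by
      rw [← sub_eq_zero, Category.assoc, Category.assoc, ← Preadditive.comp_sub, sub_eq_add_neg,
        ← Preadditive.comp_neg, ← biprod.desc_eq, ht])
    (fun t ht => by apply biprod.hom_ext <;> simp [pullback.lift_fst, pullback.lift_snd])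
    (fun t ht n hn => pullback.hom_ext
      (by rw [pullback.lift_fst, ← hn, Category.assoc, biprod.lift_fst])
      (by rw [pullback.lift_snd, ← hn, Category.assoc, biprod.lift_snd]))

theorem pullback_snd_comp_biprod_lift [HasBinaryBiproduct B Z] :
    pullback.snd f δ ≫ biprod.lift δ (𝟙 Z) =
      biprod.lift (pullback.fst f δ) (pullback.snd f δ) ≫ biprod.map f (𝟙 Z) := by
  apply biprod.hom_ext <;> simp [pullback.condition]

end

theorem universalMono_stable_under_pullback_general
    {C : Type u} [Category.{v} C] [Preadditive C]
    [HasKernels C] [HasPullbacks C] [HasPushouts C]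
    (hker : ∀ {A B X : C} (f : A ⟶ B), Nonempty (NormalMono f) →
      ∀ (g : A ⟶ X), Nonempty (NormalMono (pushout.inr f g)))
    {A B Z : C} (f : A ⟶ B) (hf : IsUniversalMono f) (δ : Z ⟶ B) :
    IsUniversalMono (pullback.snd f δ) := by
  have : HasZeroObject C := ⟨⟨kernel (𝟙 A), isZero_kernel_of_mono _⟩⟩
  have : HasBinaryProducts C := hasBinaryProducts_of_hasTerminal_and_pullbacks C
  have : HasBinaryBiproducts C := .of_hasBinaryProducts
  have := hf.1
  refine ⟨inferInstance, fun X g => ?_⟩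
  have hm : Mono (pushout.inr (biprod.lift (pullback.fst f δ) (pullback.snd f δ)) g) := by
    obtain ⟨_⟩ := hker _ ⟨⟨_, _, _, isLimitBiprodLiftPullback f δ⟩⟩ g
    infer_instance
  exact mono_pushout_inr_of_comp_eq (pullback_snd_comp_biprod_lift f δ) hm
    (hf.of_isPushout (isPushout_inl_biprod_map_id f Z))

/-- In a quasi-abelian category (preabelian, with cokernels stable under pullback and
kernels stable under pushout), universal monomorphisms are stable under pullback. -/
theorem universalMono_stable_under_pullback
    {C : Type u} [Category.{v} C] [Preadditive C]
    [HasKernels C] [HasCokernels C] [HasPullbacks C] [HasPushouts C]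
    (hcoker : ∀ {A B Z : C} (f : A ⟶ B), Nonempty (NormalEpi f) →
      ∀ (δ : Z ⟶ B), Nonempty (NormalEpi (pullback.snd f δ)))
    (hker : ∀ {A B X : C} (f : A ⟶ B), Nonempty (NormalMono f) →
      ∀ (g : A ⟶ X), Nonempty (NormalMono (pushout.inr f g)))
    {A B Z : C} (f : A ⟶ B) (hf : IsUniversalMono f) (δ : Z ⟶ B) :
    IsUniversalMono (pullback.snd f δ) :=
  universalMono_stable_under_pullback_general hker f hf δ
end

section
/- In a quasi-abelian category, universal epimorphisms are stable under pushout: if f : A ⟶ B is a universal epimorphism and g : A ⟶ X is an arbitrary morphism, then in the pushout square of f along g the induced morphism X ⟶ Y is again a universal epimorphism. -/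
open CategoryTheory CategoryTheory.Limits

universe v u

/-- An epimorphism `f` is a *universal epimorphism* if it is stable under pullback:
for every morphism `δ : Z ⟶ B`, the projection from the pullback of `f` and `δ`
to `Z` is again an epimorphism. -/
def IsUniversalEpi {C : Type u} [Category.{v} C] [HasPullbacks C]
    {A B : C} (f : A ⟶ B) : Prop :=
  Epi f ∧ ∀ ⦃Z : C⦄ (δ : Z ⟶ B), Epi (pullback.snd f δ)

/-!
Write `Y` for the pushout of `f` and `g`. In a preadditive category `Y` is the cokernel of
`(f, -g) : A ⟶ B ⊞ X`, so the map `q : B ⊞ X ⟶ Y` is a normal epimorphism and its pullback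
along any `δ : Z ⟶ Y` is again an epimorphism `P ⟶ Z`. Pulling back the universal epimorphism
`f` along `P ⟶ B ⊞ X ⟶ B` gives an epimorphism onto `P`, and the composite epimorphism
onto `Z` factors through the pullback of `pushout.inr f g` along `δ`, because
`(a, (b, x)) ↦ g a + x` lands in it. Hence that pullback projection is an epimorphism.
-/

noncomputable section

variable {C : Type u} [Category.{v} C]

/-- Every cone on `X` and `Y` is a cone over the pair of zero maps into `X`. -/
lemma hasBinaryProduct_of_hasPullback_zero [HasZeroMorphisms C] (X Y : C)
    [HasPullback (0 : X ⟶ X) (0 : Y ⟶ X)] : HasBinaryProduct X Y :=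
  let h := IsPullback.of_hasPullback (0 : X ⟶ X) (0 : Y ⟶ X)
  HasLimit.mk ⟨BinaryFan.mk _ _, BinaryFan.IsLimit.mk _ (fun a b => h.lift a b (by simp))
    (fun a b => h.lift_fst a b _) (fun a b => h.lift_snd a b _)
    (fun _ _ _ ha hb => h.hom_ext (ha.trans (h.lift_fst _ _ _).symm)
      (hb.trans (h.lift_snd _ _ _).symm))⟩

variable [Preadditive C] {A B X : C} (f : A ⟶ B) (g : A ⟶ X) [HasPushout f g]
  [HasBinaryBiproduct B X]

abbrev biprodToPushout : B ⊞ X ⟶ pushout f g :=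
  biprod.desc (pushout.inl f g) (pushout.inr f g)

def isColimitBiprodToPushout :
    IsColimit (CokernelCofork.ofπ (f := biprod.lift f (-g)) (biprodToPushout f g)
      (by simp [pushout.condition])) :=
  CokernelCofork.IsColimit.ofπ _ _
    (fun π hπ => pushout.desc (biprod.inl ≫ π) (biprod.inr ≫ π) <| by
      rw [← sub_eq_zero, sub_eq_add_neg]
      simpa [biprod.lift_eq, Preadditive.add_comp] using hπ)
    (fun _ _ => by apply biprod.hom_ext' <;> simp [pushout.inl_desc, pushout.inr_desc])
    (fun _ _ _ hm => by
      apply pushout.hom_ext <;> simp [← hm, pushout.inl_desc, pushout.inr_desc])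

instance normalEpiBiprodToPushout : NormalEpi (biprodToPushout f g) :=
  ⟨A, biprod.lift f (-g), _, isColimitBiprodToPushout f g⟩

lemma comp_pushout_inr_eq_comp_biprodToPushout {W : C} (a : W ⟶ A) (w : W ⟶ B ⊞ X)
    (h : a ≫ f = w ≫ biprod.fst) :
    (a ≫ g + w ≫ biprod.snd) ≫ pushout.inr f g = w ≫ biprodToPushout f g := by
  rw [Preadditive.add_comp, Category.assoc, ← pushout.condition, reassoc_of% h,
    biprodToPushout, biprod.desc_eq, Preadditive.comp_add, Category.assoc]

lemma epi_pullback_snd_pushout_inr [HasPullbacks C]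
    (hf : ∀ ⦃W : C⦄ (h : W ⟶ B), Epi (pullback.snd f h)) {Z : C} (δ : Z ⟶ pushout f g)
    [Epi (pullback.snd (biprodToPushout f g) δ)] :
    Epi (pullback.snd (pushout.inr f g) δ) := by
  let w := pullback.fst (biprodToPushout f g) δ
  let a := pullback.fst f (w ≫ biprod.fst)
  let r := pullback.snd f (w ≫ biprod.fst)
  have : Epi r := hf _
  let u : pullback f (w ≫ biprod.fst) ⟶ pullback (pushout.inr f g) δ :=
    pullback.lift (a ≫ g + r ≫ w ≫ biprod.snd) (r ≫ pullback.snd _ δ) <| by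
      rw [← Category.assoc r w, comp_pushout_inr_eq_comp_biprodToPushout f g _ _
        (by simpa using pullback.condition), Category.assoc, Category.assoc,
        pullback.condition]
  have hu : u ≫ pullback.snd (pushout.inr f g) δ = r ≫ pullback.snd _ δ :=
    pullback.lift_snd _ _ _
  have : Epi (u ≫ pullback.snd (pushout.inr f g) δ) := hu ▸ epi_comp _ _
  exact epi_of_epi u _

end

theorem universalEpi_stable_under_pushout_general
    {C : Type u} [Category.{v} C] [Preadditive C]
    [HasPullbacks C] [HasPushouts C]
    (hcoker : ∀ {A B Z : C} (f : A ⟶ B), Nonempty (NormalEpi f) →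
      ∀ (δ : Z ⟶ B), Nonempty (NormalEpi (pullback.snd f δ)))
    {A B X : C} (f : A ⟶ B) (hf : IsUniversalEpi f) (g : A ⟶ X) :
    IsUniversalEpi (pushout.inr f g) := by
  obtain ⟨hf_epi, hf_univ⟩ := hf
  have : HasBinaryProduct B X := hasBinaryProduct_of_hasPullback_zero B X
  have : HasBinaryBiproduct B X := HasBinaryBiproduct.of_hasBinaryProduct B X
  refine ⟨inferInstance, fun Z δ => ?_⟩
  obtain ⟨_⟩ := hcoker (biprodToPushout f g) ⟨inferInstance⟩ δ
  exact epi_pullback_snd_pushout_inr f g hf_univ δ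

/-- In a quasi-abelian category (preabelian, with cokernels stable under pullback and
kernels stable under pushout), universal epimorphisms are stable under pushout. -/
theorem universalEpi_stable_under_pushout
    {C : Type u} [Category.{v} C] [Preadditive C]
    [HasKernels C] [HasCokernels C] [HasPullbacks C] [HasPushouts C]
    (hcoker : ∀ {A B Z : C} (f : A ⟶ B), Nonempty (NormalEpi f) →
      ∀ (δ : Z ⟶ B), Nonempty (NormalEpi (pullback.snd f δ)))
    (hker : ∀ {A B X : C} (f : A ⟶ B), Nonempty (NormalMono f) →
      ∀ (g : A ⟶ X), Nonempty (NormalMono (pushout.inr f g)))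
    {A B X : C} (f : A ⟶ B) (hf : IsUniversalEpi f) (g : A ⟶ X) :
    IsUniversalEpi (pushout.inr f g) :=
  universalEpi_stable_under_pushout_general hcoker f hf g
end

section
/- Let 𝒜 be an abelian category, f : A ⟶ B a morphism, and α : Ker f ⟶ G an epimorphism with kernel N, so that N is a subobject of Ker f and hence of A via the composite monomorphism N ⟶ Ker f ⟶ A. Let q : A ⟶ A/N be the cokernel of this monomorphism, and form the pushout of f along q, with induced morphism f' : A/N ⟶ Y. Then the kernel of f' is isomorphic to G; more precisely, the canonical morphism from Ker f to Ker f' induced by the pushout square coincides (under this isomorphism) with α. In particular, every epimorphism out of Ker f is realized as the induced morphism between kernels of a pushout of f. -/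
open CategoryTheory CategoryTheory.Limits

universe v u

/-! The square formed by `f`, `q` and the pushout induces an epimorphism `Ker f ⟶ Ker f'`.
Its kernel is `N = Ker α`: a map into `Ker f` killed by `q` factors through `N ⟶ A`, since a
mono is the kernel of its cokernel. Two epimorphisms out of `Ker f` with the same kernel
differ by an isomorphism. -/

noncomputable def inducedKernelMap {C : Type u} [Category.{v} C] [Abelian C]
    {A B G : C} (f : A ⟶ B) (α : kernel f ⟶ G) :
    kernel f ⟶ kernel (pushout.inr f (cokernel.π (kernel.ι α ≫ kernel.ι f))) :=
  kernel.lift _ (kernel.ι f ≫ cokernel.π (kernel.ι α ≫ kernel.ι f)) (by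
    rw [Category.assoc, ← pushout.condition, ← Category.assoc, kernel.condition,
      zero_comp])

namespace CategoryTheory.Abelian

variable {C : Type u} [Category.{v} C] [Abelian C]

lemma exists_iso_comp_hom_eq_of_epi {X Y Z : C} (g : X ⟶ Y) (h : X ⟶ Z) [Epi g] [Epi h]
    (hg : kernel.ι g ≫ h = 0) (hh : kernel.ι h ≫ g = 0) : ∃ e : Y ≅ Z, g ≫ e.hom = h :=
  ⟨⟨epiDesc g h hg, epiDesc h g hh, by simp [← cancel_epi g], by simp [← cancel_epi h]⟩,
    comp_epiDesc g h hg⟩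

lemma comp_eq_zero_of_comp_cokernel_π_eq_zero {K A G T : C} (i : K ⟶ A) [Mono i] (h : K ⟶ G)
    (x : T ⟶ K) (hx : x ≫ i ≫ cokernel.π (kernel.ι h ≫ i) = 0) : x ≫ h = 0 := by
  have hexact := ShortComplex.exact_cokernel (kernel.ι h ≫ i)
  have hfac : hexact.lift (x ≫ i) (by simpa using hx) ≫ kernel.ι h = x := by
    rw [← cancel_mono i, Category.assoc]
    exact hexact.lift_f _ _
  rw [← hfac, Category.assoc, kernel.condition, comp_zero]

end CategoryTheory.Abelian

section

variable {C : Type u} [Category.{v} C] [Abelian C] {A B G : C} (f : A ⟶ B) (α : kernel f ⟶ G)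

lemma inducedKernelMap_ι :
    inducedKernelMap f α ≫ kernel.ι (pushout.inr f (cokernel.π (kernel.ι α ≫ kernel.ι f))) =
      kernel.ι f ≫ cokernel.π (kernel.ι α ≫ kernel.ι f) :=
  kernel.lift_ι _ _ _

instance epi_inducedKernelMap : Epi (inducedKernelMap f α) :=
  Abelian.epi_kernel_map_of_isPushout (IsPushout.of_hasPushout _ _)

lemma kernel_ι_comp_inducedKernelMap : kernel.ι α ≫ inducedKernelMap f α = 0 := by
  rw [← cancel_mono (kernel.ι _), Category.assoc, inducedKernelMap_ι, ← Category.assoc,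
    cokernel.condition, zero_comp]

lemma kernel_ι_inducedKernelMap_comp : kernel.ι (inducedKernelMap f α) ≫ α = 0 :=
  Abelian.comp_eq_zero_of_comp_cokernel_π_eq_zero (kernel.ι f) α _ <| by
    rw [← inducedKernelMap_ι, kernel.condition_assoc, zero_comp]

end

/-- Every epimorphism `α : Ker f ⟶ G` is realized as the induced morphism between
kernels of a suitable pushout of `f`: taking `N = Ker α`, `q : A ⟶ A/N` the cokernel
of `N ⟶ A`, and the pushout of `f` along `q` with `f' : A/N ⟶ Y`, the kernel of `f'`
is isomorphic to `G`, and under this isomorphism the canonical morphism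
`Ker f ⟶ Ker f'` coincides with `α`. -/
theorem kernel_pushout_realizes_epi {C : Type u} [Category.{v} C] [Abelian C]
    {A B G : C} (f : A ⟶ B) (α : kernel f ⟶ G) [Epi α] :
    ∃ e : kernel (pushout.inr f (cokernel.π (kernel.ι α ≫ kernel.ι f))) ≅ G,
      inducedKernelMap f α ≫ e.hom = α :=
  Abelian.exists_iso_comp_hom_eq_of_epi _ _ (kernel_ι_inducedKernelMap_comp f α)
    (kernel_ι_comp_inducedKernelMap f α)
end

section
/- Let 𝕜 be a nontrivially normed field, let A and G be normed 𝕜-vector spaces, let g : A →L[𝕜] G be a continuous linear map, and let i : A → Completion A be the canonical map into the completion. Let S be the closure in G × Completion A of the set { (-g a, i a) : a ∈ A } (a closed subspace). Then for m ∈ G one has (m, 0) ∈ S if and only if m = 0; consequently the map j : G → (G × Completion A) ⧸ S sending m to the class of (m, 0) is injective. (This is the key step showing that the completion morphism i : A → Completion A is a universal monomorphism in the category of normed spaces.) -/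
/-!
The continuous linear map `(x, y) ↦ ↑x + ĝ y : G × Completion A → Completion G`, where `ĝ` is
the completion of `g`, vanishes on the pairs `(-g a, ↑a)` and hence, its kernel being closed,
on their closure `S`. On `(m, 0)` it is the embedding `m ↦ ↑m`, so `(m, 0) ∈ S` forces `m = 0`.
-/

open UniformSpace

theorem Submodule.injective_mk_inl {R M N : Type*} [Ring R] [AddCommGroup M] [Module R M]
    [AddCommGroup N] [Module R N] {p : Submodule R (M × N)}
    (hp : ∀ m : M, (m, (0 : N)) ∈ p → m = 0) :
    Function.Injective (fun m : M => Submodule.Quotient.mk (p := p) (m, (0 : N))) := by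
  intro m m' h
  rw [Submodule.Quotient.eq] at h
  exact sub_eq_zero.mp (hp _ (by simpa using h))

section Pushout

variable {R E G C H : Type*} [Ring R]
  [AddCommGroup E] [Module R E] [TopologicalSpace E]
  [AddCommGroup G] [Module R G] [TopologicalSpace G]
  [IsTopologicalAddGroup G] [ContinuousConstSMul R G]
  [AddCommGroup C] [Module R C] [TopologicalSpace C] [ContinuousAdd C] [ContinuousConstSMul R C]
  [AddCommGroup H] [Module R H] [TopologicalSpace H] [ContinuousAdd H] [T1Space H]

theorem ContinuousLinearMap.closure_range_prod_neg_le_ker_coprod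
    {u : E →L[R] G} {i : E →L[R] C} {ψ : G →L[R] H} {φ : C →L[R] H} (h : ψ ∘L u = φ ∘L i) :
    (LinearMap.range (LinearMap.prod (-u.toLinearMap) i.toLinearMap)).topologicalClosure ≤
      LinearMap.ker (ψ.coprod φ : G × C →ₗ[R] H) := by
  refine Submodule.topologicalClosure_minimal _ ?_ (ψ.coprod φ).isClosed_ker
  rintro _ ⟨a, rfl⟩
  simp [← ContinuousLinearMap.comp_apply, h]

theorem ContinuousLinearMap.eq_zero_of_mem_closure_range_prod_neg
    {u : E →L[R] G} {i : E →L[R] C} {ψ : G →L[R] H} {φ : C →L[R] H}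
    (hψ : Function.Injective ψ) (h : ψ ∘L u = φ ∘L i) {m : G}
    (hm : (m, (0 : C)) ∈
      (LinearMap.range (LinearMap.prod (-u.toLinearMap) i.toLinearMap)).topologicalClosure) :
    m = 0 := by
  have := ContinuousLinearMap.closure_range_prod_neg_le_ker_coprod h hm
  exact hψ (by simpa using this)

end Pushout

/-- Let `g : A →L[𝕜] G` be a continuous linear map of normed spaces and
`i : A → Completion A` the canonical map into the completion. Let `S` be the closure
in `G × Completion A` of `{ (-g a, i a) | a ∈ A }`. Then `(m, 0) ∈ S ↔ m = 0`, and
consequently the pushout map `j : G → (G × Completion A) ⧸ S`, `m ↦ [(m, 0)]`, is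
injective. -/
theorem completion_universalMono {𝕜 : Type*} [NontriviallyNormedField 𝕜]
    {A G : Type*} [NormedAddCommGroup A] [NormedSpace 𝕜 A]
    [NormedAddCommGroup G] [NormedSpace 𝕜 G]
    (g : A →L[𝕜] G) :
    (∀ m : G,
      (m, (0 : Completion A)) ∈
        Submodule.topologicalClosure
          (LinearMap.range (LinearMap.prod (-g.toLinearMap)
            (Completion.toComplL (𝕜 := 𝕜) (E := A)).toLinearMap)) ↔ m = 0) ∧
    Function.Injective (fun m : G =>
      Submodule.Quotient.mk
        (p := Submodule.topologicalClosure
          (LinearMap.range (LinearMap.prod (-g.toLinearMap)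
            (Completion.toComplL (𝕜 := 𝕜) (E := A)).toLinearMap)))
        (m, (0 : Completion A))) := by
  have hg : Completion.toComplL ∘L g = g.completion ∘L Completion.toComplL := by
    ext a; simp
  have key : ∀ m : G, (m, (0 : Completion A)) ∈ _ ↔ m = 0 := fun m =>
    ⟨ContinuousLinearMap.eq_zero_of_mem_closure_range_prod_neg (Completion.coe_injective G) hg,
      fun hm => hm ▸ Submodule.zero_mem _⟩
  exact ⟨key, Submodule.injective_mk_inl fun m => (key m).mp⟩
end

section
/- Let π : ℚ → ℚ⧸ℤ be the quotient homomorphism, let X be any additive abelian group, and let g : ℚ →+ X be a homomorphism. Form Y := ((ℚ⧸ℤ) × X) ⧸ K, where K is the subgroup { (π q, -g q) : q ∈ ℚ }, and let f' : X →+ Y send x to the class of (0, x). Then the kernel of f' is a cyclic group (an epimorphic image of ℤ = ker π), and in particular every divisible subgroup of ker f' is trivial. (This shows the pushout of π along any morphism in the category of divisible groups is again a monomorphism there, i.e., π : ℚ → ℚ⧸ℤ is a universal monomorphism in Div.) -/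
/-- A subgroup of a cyclic subgroup `zmultiples x` which is divisible is trivial. -/
lemma divisible_le_zmultiples_eq_bot {X : Type*} [AddCommGroup X] (x : X) (H : AddSubgroup X)
    (hle : H ≤ AddSubgroup.zmultiples x)
    (hdiv : ∀ n : ℕ, 0 < n → ∀ h ∈ H, ∃ h' ∈ H, n • h' = h) : H = ⊥ := by
  have hrange : H ≤ (zmultiplesHom X x).range := by
    intro h hh
    obtain ⟨m, hm⟩ := hle hh
    exact ⟨m, hm⟩
  obtain ⟨d, hd⟩ := Int.subgroup_cyclic (H.comap (zmultiplesHom X x))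
  have hH : H = AddSubgroup.zmultiples (d • x) := by
    conv_lhs => rw [← AddSubgroup.map_comap_eq_self hrange, hd]
    rw [AddSubgroup.zmultiples_eq_closure, AddMonoidHom.map_closure]
    simp
  set y := d • x with hy
  have hyH : y ∈ H := hH ▸ AddSubgroup.mem_zmultiples y
  obtain ⟨h', h'H, h2⟩ := hdiv 2 (by norm_num) y hyH
  rw [hH] at h'H
  obtain ⟨m, hm⟩ := h'H
  have hodd : (2 * m - 1) • y = 0 := by
    have : (2 * m) • y = y := by
      rw [mul_smul]; rw [← hm] at h2
      simpa [two_zsmul, two_nsmul] using h2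
    rw [sub_smul, this, one_smul, sub_self]
  set n := (2 * m - 1).natAbs with hn
  have hnpos : 0 < n := by
    have : 2 * m - 1 ≠ 0 := by omega
    simpa [hn, Int.natAbs_pos] using this
  have hny : (n : ℤ) • y = 0 := by
    rcases Int.natAbs_eq (2 * m - 1) with h | h
    · rw [← h]; exact hodd
    · have : -(n : ℤ) • y = 0 := by rw [← h]; exact hodd
      rw [neg_smul, neg_eq_zero] at this; exact this
  obtain ⟨h'', h''H, hn''⟩ := hdiv n hnpos y hyH
  rw [hH] at h''H
  obtain ⟨m'', hm''⟩ := h''H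
  have : y = 0 := by
    rw [← hn'', ← hm'', ← natCast_zsmul, smul_comm, hny, smul_zero]
  rw [hH, this, AddSubgroup.zmultiples_zero_eq_bot]

/-- The kernel of the cobase-change map is `zmultiples (g 1)`. -/
lemma ker_pushout_eq_zmultiples {X : Type*} [AddCommGroup X] (g : ℚ →+ X) :
    AddMonoidHom.ker
        ((QuotientAddGroup.mk'
            (AddMonoidHom.range
              (AddMonoidHom.prod
                (QuotientAddGroup.mk' (AddMonoidHom.range (Int.castAddHom ℚ))) (-g)))).comp
          (AddMonoidHom.inr (ℚ ⧸ AddMonoidHom.range (Int.castAddHom ℚ)) X)) =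
        AddSubgroup.zmultiples (g 1) := by
  ext x
  simp only [AddMonoidHom.mem_ker, AddMonoidHom.comp_apply, AddMonoidHom.inr_apply,
    QuotientAddGroup.mk'_apply, QuotientAddGroup.eq_zero_iff, AddMonoidHom.mem_range,
    AddMonoidHom.prod_apply, Prod.mk.injEq, AddSubgroup.mem_zmultiples_iff,
    AddMonoidHom.neg_apply, Int.coe_castAddHom]
  constructor
  · rintro ⟨q, hq1, hq2⟩
    obtain ⟨n, hn⟩ := hq1
    refine ⟨-n, ?_⟩
    rw [← hq2, ← hn, neg_smul, neg_inj, ← zsmul_one (n:ℤ), ← map_zsmul g]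
  · rintro ⟨m, hm⟩
    refine ⟨(-m : ℤ), ⟨-m, rfl⟩, ?_⟩
    rw [← hm, ← zsmul_one (-m : ℤ), map_zsmul g, neg_smul, neg_neg]

/-- Let `π : ℚ → ℚ ⧸ ℤ` be the quotient map, `X` an abelian group, `g : ℚ →+ X`, and
form the pushout `Y := ((ℚ ⧸ ℤ) × X) ⧸ K` with `K = { (π q, -g q) | q ∈ ℚ }` and
cobase-change map `f' : X →+ Y`, `x ↦ [(0, x)]`. Then `ker f'` is cyclic, and every
divisible subgroup of `ker f'` is trivial — so `π` is a universal monomorphism in the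
category of divisible groups. -/
theorem pushout_of_ratQuotient_mono {X : Type*} [AddCommGroup X] (g : ℚ →+ X) :
    (∃ x : X,
      AddMonoidHom.ker
        ((QuotientAddGroup.mk'
            (AddMonoidHom.range
              (AddMonoidHom.prod
                (QuotientAddGroup.mk' (AddMonoidHom.range (Int.castAddHom ℚ))) (-g)))).comp
          (AddMonoidHom.inr (ℚ ⧸ AddMonoidHom.range (Int.castAddHom ℚ)) X)) =
        AddSubgroup.zmultiples x) ∧
    ∀ H : AddSubgroup X,
      H ≤ AddMonoidHom.ker
        ((QuotientAddGroup.mk'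
            (AddMonoidHom.range
              (AddMonoidHom.prod
                (QuotientAddGroup.mk' (AddMonoidHom.range (Int.castAddHom ℚ))) (-g)))).comp
          (AddMonoidHom.inr (ℚ ⧸ AddMonoidHom.range (Int.castAddHom ℚ)) X)) →
      (∀ n : ℕ, 0 < n → ∀ h ∈ H, ∃ h' ∈ H, n • h' = h) →
      H = ⊥ := by
  refine ⟨⟨g 1, ker_pushout_eq_zmultiples g⟩, fun H hle hdiv => ?_⟩
  rw [ker_pushout_eq_zmultiples g] at hle
  exact divisible_le_zmultiples_eq_bot (g 1) H hle hdiv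
end

section
/- Let 𝕜 be ℝ or ℂ, let X and Y be normed 𝕜-spaces, and let u : X →L[𝕜] Y be a continuous linear operator that is not bounded below (there is no δ > 0 with ‖u x‖ ≥ δ‖x‖ for all x). Then there exists a continuous linear functional φ : X →L[𝕜] 𝕜 such that sup { ‖φ x‖ : x ∈ X, ‖u x‖ ≤ 1 } = ∞; that is, for every C > 0 there exists x ∈ X with ‖u x‖ ≤ 1 and ‖φ x‖ > C. -/
/-- If a continuous linear operator `u : X →L[𝕜] Y` between normed spaces over `ℝ` or
`ℂ` is not bounded below, then there is a continuous linear functional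
`φ : X →L[𝕜] 𝕜` with `sup { ‖φ x‖ : ‖u x‖ ≤ 1 } = ∞`: for every `C > 0` there is `x`
with `‖u x‖ ≤ 1` and `‖φ x‖ > C`. -/
theorem exists_functional_unbounded_of_not_boundedBelow {𝕜 : Type*} [RCLike 𝕜]
    {X Y : Type*} [NormedAddCommGroup X] [NormedSpace 𝕜 X]
    [NormedAddCommGroup Y] [NormedSpace 𝕜 Y]
    (u : X →L[𝕜] Y)
    (hu : ¬ ∃ δ : ℝ, 0 < δ ∧ ∀ x : X, δ * ‖x‖ ≤ ‖u x‖) :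
    ∃ φ : X →L[𝕜] 𝕜, ∀ C : ℝ, 0 < C → ∃ x : X, ‖u x‖ ≤ 1 ∧ C < ‖φ x‖ := by
  by_contra h
  push_neg at h
  -- for each φ, a bound on the set S = {x | ‖u x‖ ≤ 1}
  have hptwise : ∀ φ : X →L[𝕜] 𝕜, ∃ C : ℝ,
      ∀ x : {x : X // ‖u x‖ ≤ 1},
        ‖(NormedSpace.inclusionInDoubleDual 𝕜 X x.1) φ‖ ≤ C := by
    intro φ
    obtain ⟨C, hC, hCb⟩ := h φ
    exact ⟨C, fun x => by simpa using hCb x.1 x.2⟩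
  obtain ⟨C', hC'⟩ := banach_steinhaus (g := fun x : {x : X // ‖u x‖ ≤ 1} =>
    NormedSpace.inclusionInDoubleDual 𝕜 X x.1) (fun φ => hptwise φ)
  -- so ‖x‖ ≤ C' for all x ∈ S
  have hbound : ∀ x : X, ‖u x‖ ≤ 1 → ‖x‖ ≤ C' := fun x hx => by
    have h1 := hC' ⟨x, hx⟩
    exact le_trans (le_of_eq ((NormedSpace.inclusionInDoubleDualLi 𝕜 (E := X)).norm_map x).symm) h1
  set D := max C' 1 with hD
  have hDpos : (0 : ℝ) < D := lt_of_lt_of_le one_pos (le_max_right _ _)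
  apply hu
  refine ⟨D⁻¹, inv_pos.2 hDpos, fun x => ?_⟩
  rcases eq_or_ne (u x) 0 with h0 | h0
  · -- u x = 0 forces x = 0
    have hx0 : x = 0 := by
      by_contra hx
      have hxn : (0:ℝ) < ‖x‖ := norm_pos_iff.2 hx
      -- scale x by t : for any t > 0, ‖u (t x)‖ = 0 ≤ 1
      have : ∀ t : ℝ, 0 ≤ t → t * ‖x‖ ≤ C' := by
        intro t ht
        have : ‖u ((t : 𝕜) • x)‖ ≤ 1 := by
          rw [map_smul, h0, smul_zero, norm_zero]; exact zero_le_one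
        have := hbound _ this
        rwa [norm_smul, RCLike.norm_ofReal, abs_of_nonneg ht] at this
      have hC'0 : (0:ℝ) ≤ C' := le_trans (norm_nonneg (0:X)) (hbound 0 (by simp))
      have h1 := this ((C' + 1) / ‖x‖) (div_nonneg (by linarith) hxn.le)
      rw [div_mul_cancel₀ _ (ne_of_gt hxn)] at h1
      linarith
    simp [hx0, h0]
  · have hun : (0:ℝ) < ‖u x‖ := norm_pos_iff.2 h0
    have hs : ‖u ((‖u x‖⁻¹ : 𝕜) • x)‖ ≤ 1 := by
      rw [map_smul, norm_smul]
      simp only [norm_inv, RCLike.norm_ofReal, abs_of_nonneg (le_of_lt hun)]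
      rw [inv_mul_le_iff₀ hun, mul_one]
    have := hbound _ hs
    rw [norm_smul, norm_inv, RCLike.norm_ofReal, abs_of_nonneg (le_of_lt hun)] at this
    rw [inv_mul_le_iff₀ hun] at this
    have hxle : ‖x‖ ≤ C' * ‖u x‖ := this.trans_eq (mul_comm _ _)
    have hC'D : C' ≤ D := le_max_left _ _
    calc D⁻¹ * ‖x‖ ≤ D⁻¹ * (D * ‖u x‖) := by
          apply mul_le_mul_of_nonneg_left _ (le_of_lt (inv_pos.2 hDpos))
          exact hxle.trans (mul_le_mul_of_nonneg_right hC'D (norm_nonneg _))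
      _ = ‖u x‖ := by field_simp
end

section
/- Let 𝕜 be ℝ or ℂ, let X and Y be normed 𝕜-spaces, and let u : X →L[𝕜] Y be a continuous linear operator that is not bounded below. Then there exists a continuous linear functional φ : X →L[𝕜] 𝕜 such that the point (1, 0) ∈ 𝕜 × Y lies in the closure of the set { (φ x, -u x) : x ∈ X }. Consequently, letting S be this closure (a closed subspace of 𝕜 × Y), the map j : 𝕜 → (𝕜 × Y) ⧸ S sending λ to the class of (λ, 0) satisfies j(1) = 0 and is therefore not injective. -/
/-!
If every functional `ψ ∘ u` exhausted the dual of `X`, the open mapping theorem applied to the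
surjection `ψ ↦ ψ ∘ u` between the (complete) dual spaces, combined with norming functionals
on `X`, would make `u` bounded below. So some `φ` is not of the form `ψ ∘ u`. If `(1, 0)` were
outside the closed subspace `S` spanned by the `(φ x, -u x)`, Hahn–Banach would give a
functional `F` on `𝕜 × Y` with `F (1, 0) = 1` vanishing on `S`, and then `ψ := F (0, ·)`
would satisfy `ψ ∘ u = φ`.
-/

open Function ContinuousLinearMap

section

variable {𝕜 : Type*} [RCLike 𝕜]

theorem Submodule.exists_strongDual_eq_one_of_notMem {E : Type*} [NormedAddCommGroup E]
    [NormedSpace 𝕜 E] {S : Submodule 𝕜 E} (hS : IsClosed (S : Set E)) {z : E} (hz : z ∉ S) :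
    ∃ F : StrongDual 𝕜 E, F z = 1 ∧ ∀ s ∈ S, F s = 0 := by
  have : IsClosed (S : Set E) := hS
  obtain ⟨g, hg⟩ := SeparatingDual.exists_eq_one (R := 𝕜) (x := S.mkQ z) (by simpa using hz)
  exact ⟨g.comp S.mkQL, hg, fun s hs => by simp [(Submodule.Quotient.mk_eq_zero S).2 hs]⟩

variable {X Y : Type*} [NormedAddCommGroup X] [NormedSpace 𝕜 X]
  [NormedAddCommGroup Y] [NormedSpace 𝕜 Y]

theorem ContinuousLinearMap.exists_pos_mul_norm_le_of_surjective_precomp (u : X →L[𝕜] Y)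
    (hu : Surjective fun ψ : StrongDual 𝕜 Y => ψ.comp u) :
    ∃ δ : ℝ, 0 < δ ∧ ∀ x : X, δ * ‖x‖ ≤ ‖u x‖ := by
  obtain ⟨C, hC, hpre⟩ := exists_preimage_norm_le ((compL 𝕜 X Y 𝕜).flip u) hu
  refine ⟨C⁻¹, inv_pos.2 hC, fun x => ?_⟩
  obtain ⟨f, hf, hfx⟩ := exists_dual_vector'' 𝕜 x
  obtain ⟨ψ, hψu, hψ⟩ := hpre f
  rw [inv_mul_le_iff₀ hC]
  calc ‖x‖ = ‖f x‖ := by simp [hfx]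
    _ = ‖ψ (u x)‖ := by rw [← hψu]; rfl
    _ ≤ ‖ψ‖ * ‖u x‖ := ψ.le_opNorm _
    _ ≤ C * ‖u x‖ := by
        gcongr
        exact hψ.trans (mul_le_of_le_one_right hC.le hf)

theorem ContinuousLinearMap.one_zero_mem_topologicalClosure_range_prod_neg (u : X →L[𝕜] Y)
    {φ : StrongDual 𝕜 X} (hφ : ∀ ψ : StrongDual 𝕜 Y, ψ.comp u ≠ φ) :
    ((1 : 𝕜), (0 : Y)) ∈
      (LinearMap.range (φ.toLinearMap.prod (-u.toLinearMap))).topologicalClosure := by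
  by_contra h
  obtain ⟨F, hF1, hF⟩ :=
    Submodule.exists_strongDual_eq_one_of_notMem (Submodule.isClosed_topologicalClosure _) h
  refine hφ (F.comp (inr 𝕜 𝕜 Y)) (ext fun x => ?_)
  have hx : F (φ x, -u x) = 0 := hF _ (Submodule.le_topologicalClosure _ ⟨x, rfl⟩)
  have hsplit : (φ x, -u x) = φ x • ((1 : 𝕜), (0 : Y)) - (0, u x) := by ext <;> simp
  rw [hsplit, map_sub, map_smul, hF1, smul_eq_mul, mul_one, sub_eq_zero] at hx
  exact hx.symm

end

/-- If a continuous linear operator `u : X →L[𝕜] Y` between normed spaces over `ℝ` or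
`ℂ` is not bounded below, then there exists a continuous linear functional
`φ : X →L[𝕜] 𝕜` such that `(1, 0)` lies in the closure of `{ (φ x, -u x) | x ∈ X }`;
hence, with `S` this closed subspace of `𝕜 × Y`, the pushout map
`j : 𝕜 → (𝕜 × Y) ⧸ S`, `λ ↦ [(λ, 0)]`, satisfies `j 1 = 0` and is not injective. -/
theorem not_universalMono_of_not_boundedBelow {𝕜 : Type*} [RCLike 𝕜]
    {X Y : Type*} [NormedAddCommGroup X] [NormedSpace 𝕜 X]
    [NormedAddCommGroup Y] [NormedSpace 𝕜 Y]
    (u : X →L[𝕜] Y)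
    (hu : ¬ ∃ δ : ℝ, 0 < δ ∧ ∀ x : X, δ * ‖x‖ ≤ ‖u x‖) :
    ∃ φ : X →L[𝕜] 𝕜,
      ((1 : 𝕜), (0 : Y)) ∈ closure (Set.range (fun x : X => (φ x, -u x))) ∧
      Submodule.Quotient.mk
        (p := Submodule.topologicalClosure
          (LinearMap.range (LinearMap.prod φ.toLinearMap (-u.toLinearMap))))
        ((1 : 𝕜), (0 : Y)) = 0 ∧
      ¬ Function.Injective (fun lam : 𝕜 =>
        Submodule.Quotient.mk
          (p := Submodule.topologicalClosure
            (LinearMap.range (LinearMap.prod φ.toLinearMap (-u.toLinearMap))))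
          (lam, (0 : Y))) := by
  obtain ⟨φ, hφ⟩ : ∃ φ : StrongDual 𝕜 X, ∀ ψ : StrongDual 𝕜 Y, ψ.comp u ≠ φ := by
    by_contra! h
    exact hu (u.exists_pos_mul_norm_le_of_surjective_precomp h)
  have hmem := u.one_zero_mem_topologicalClosure_range_prod_neg hφ
  have hj : Submodule.Quotient.mk (p := _) ((1 : 𝕜), (0 : Y)) = 0 :=
    (Submodule.Quotient.mk_eq_zero _).2 hmem
  refine ⟨φ, ?_, hj, fun hinj => one_ne_zero (hinj (hj.trans ?_))⟩
  · rw [← SetLike.mem_coe, Submodule.topologicalClosure_coe, LinearMap.coe_range] at hmem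
    exact hmem
  · exact ((Submodule.Quotient.mk_eq_zero _).2 (Submodule.zero_mem _)).symm
end

section
/- Let 𝕜 be ℝ or ℂ, let X and Y be Banach 𝕜-spaces, and let u : X →L[𝕜] Y be an injective continuous linear operator. Then u is bounded below (there exists δ > 0 with ‖u x‖ ≥ δ‖x‖ for all x) if and only if for every Banach 𝕜-space G and every continuous linear map g : X →L[𝕜] G, the map j : G → (G × Y) ⧸ S, m ↦ class of (m, 0), is injective, where S is the closure in G × Y of the set { (g x, -u x) : x ∈ X }. (In other words, the universal monomorphisms in the category of Banach spaces are exactly the operators bounded below, which are exactly the strict monomorphisms; M_u = M_c in Ban.) -/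
/-!
If `u` is bounded below it is a topological embedding, so `(g xₙ, -u xₙ) → (m, 0)` forces
`xₙ → 0` and hence `m = 0`. Conversely, take `G = 𝕜` and `g = φ` a functional: injectivity of
the pushout map puts `(1, 0)` outside the closed subspace `S`, and a functional on `𝕜 × Y`
vanishing on `S` but not at `(1, 0)` restricts along `Y → 𝕜 × Y` to an extension of `φ` through
`u`. So `ψ ↦ ψ ∘ u` is onto between dual spaces, which are complete; the open mapping theorem
bounds the norms of the extensions, and testing on norming functionals bounds `u` below.
-/

open Filter Topology Function

theorem Submodule.injective_mk_inl_iff {R G Y : Type*} [Ring R] [AddCommGroup G] [Module R G]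
    [AddCommGroup Y] [Module R Y] (p : Submodule R (G × Y)) :
    Injective (fun m : G => Submodule.Quotient.mk (p := p) (m, (0 : Y))) ↔
      ∀ m : G, (m, (0 : Y)) ∈ p → m = 0 := by
  change Injective (p.mkQ ∘ₗ LinearMap.inl R G Y) ↔ _
  rw [injective_iff_map_eq_zero]
  simp [Submodule.Quotient.mk_eq_zero]

section

variable {𝕜 : Type*} [RCLike 𝕜]
  {X : Type*} [NormedAddCommGroup X] [NormedSpace 𝕜 X]
  {Y : Type*} [NormedAddCommGroup Y] [NormedSpace 𝕜 Y]
  {G : Type*} [NormedAddCommGroup G] [NormedSpace 𝕜 G]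

theorem Submodule.exists_strongDual_vanishing_of_notMem {p : Submodule 𝕜 G}
    (hp : IsClosed (p : Set G)) {x : G} (hx : x ∉ p) :
    ∃ f : StrongDual 𝕜 G, (∀ y ∈ p, f y = 0) ∧ f x ≠ 0 := by
  have : IsClosed (p : Set G) := hp
  have hx' : p.mkQL x ≠ 0 := by simpa [Submodule.Quotient.mk_eq_zero] using hx
  obtain ⟨φ, -, hφ⟩ := exists_dual_vector 𝕜 _ (norm_ne_zero_iff.mpr hx')
  refine ⟨φ ∘L p.mkQL, fun y hy => ?_, ?_⟩
  · simp [(Submodule.Quotient.mk_eq_zero p).mpr hy]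
  · rw [ContinuousLinearMap.comp_apply, hφ]
    exact_mod_cast norm_ne_zero_iff.mpr hx'

/-- The closed subspace `S` of `G × Y` whose quotient is the pushout of `u` along `g`. -/
def pushoutSubmodule (g : X →L[𝕜] G) (u : X →L[𝕜] Y) : Submodule 𝕜 (G × Y) :=
  (LinearMap.range (LinearMap.prod g.toLinearMap (-u.toLinearMap))).topologicalClosure

theorem ContinuousLinearMap.isInducing_of_mul_norm_le {u : X →L[𝕜] Y} {δ : ℝ} (hδ : 0 < δ)
    (h : ∀ x, δ * ‖x‖ ≤ ‖u x‖) : IsInducing u := by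
  refine (u.isUniformEmbedding_of_bound (K := (Real.toNNReal δ⁻¹)) fun x => ?_).isInducing
  rw [Real.coe_toNNReal _ (by positivity), ← div_eq_inv_mul, le_div_iff₀ hδ, mul_comm]
  exact h x

theorem eq_zero_of_inl_mem_pushoutSubmodule {g : X →L[𝕜] G} {u : X →L[𝕜] Y} (hu : IsInducing u)
    {m : G} (hm : (m, (0 : Y)) ∈ pushoutSubmodule g u) : m = 0 := by
  rw [pushoutSubmodule, ← SetLike.mem_coe, Submodule.topologicalClosure_coe, LinearMap.coe_range,
    mem_closure_iff_seq_limit] at hm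
  obtain ⟨p, hp, hlim⟩ := hm
  choose x hx using hp
  obtain rfl : p = fun n => (g (x n), -u (x n)) := funext fun n => (hx n).symm
  have hux : Tendsto (fun n => u (x n)) atTop (𝓝 (u 0)) := by simpa using hlim.snd_nhds.neg
  have hx0 : Tendsto x atTop (𝓝 0) := hu.tendsto_nhds_iff.mpr hux
  have hgx : Tendsto (fun n => g (x n)) atTop (𝓝 0) := by
    simpa [comp_def] using (g.continuous.tendsto 0).comp hx0
  exact tendsto_nhds_unique hlim.fst_nhds hgx

theorem exists_comp_eq_of_notMem_pushoutSubmodule {u : X →L[𝕜] Y} {φ : StrongDual 𝕜 X}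
    (h : ((1 : 𝕜), (0 : Y)) ∉ pushoutSubmodule φ u) : ∃ ψ : StrongDual 𝕜 Y, ψ ∘L u = φ := by
  obtain ⟨F, hFS, hF⟩ :=
    Submodule.exists_strongDual_vanishing_of_notMem (Submodule.isClosed_topologicalClosure _) h
  refine ⟨(F (1, 0))⁻¹ • F ∘L ContinuousLinearMap.inr 𝕜 𝕜 Y, ?_⟩
  ext x
  have hx : F (0, u x) = φ x * F (1, 0) := by
    have hzero : F (φ x, -u x) = 0 := hFS _ (Submodule.le_topologicalClosure _ ⟨x, rfl⟩)
    have hsplit : ((φ x, -u x) : 𝕜 × Y) = φ x • ((1 : 𝕜), (0 : Y)) - (0, u x) := by simp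
    rw [hsplit, map_sub, map_smul, smul_eq_mul, sub_eq_zero] at hzero
    exact hzero.symm
  simp [hx, mul_comm (φ x), inv_mul_cancel_left₀ hF]

theorem exists_pos_mul_norm_le_of_forall_exists_comp_eq {u : X →L[𝕜] Y}
    (h : ∀ φ : StrongDual 𝕜 X, ∃ ψ : StrongDual 𝕜 Y, ψ ∘L u = φ) :
    ∃ δ : ℝ, 0 < δ ∧ ∀ x : X, δ * ‖x‖ ≤ ‖u x‖ := by
  obtain ⟨C, hC, hpre⟩ := ((ContinuousLinearMap.compL 𝕜 X Y 𝕜).flip u).exists_preimage_norm_le h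
  refine ⟨C⁻¹, inv_pos.mpr hC, fun x => ?_⟩
  obtain ⟨φ, hφ, hφx⟩ := exists_dual_vector'' 𝕜 x
  obtain ⟨ψ, hψu, hψ⟩ := hpre φ
  have hψx : ψ (u x) = ‖x‖ := by rw [← hφx, ← hψu]; rfl
  rw [inv_mul_le_iff₀ hC]
  calc ‖x‖ = ‖ψ (u x)‖ := by simp [hψx]
    _ ≤ ‖ψ‖ * ‖u x‖ := ψ.le_opNorm _
    _ ≤ C * ‖u x‖ := by gcongr; exact hψ.trans (mul_le_of_le_one_right hC.le hφ)

end

theorem universalMono_iff_boundedBelow_Banach_general {𝕜 : Type u} [RCLike 𝕜]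
    {X Y : Type u} [NormedAddCommGroup X] [NormedSpace 𝕜 X]
    [NormedAddCommGroup Y] [NormedSpace 𝕜 Y]
    (u : X →L[𝕜] Y) :
    (∃ δ : ℝ, 0 < δ ∧ ∀ x : X, δ * ‖x‖ ≤ ‖u x‖) ↔
      ∀ (G : Type u) (_ : NormedAddCommGroup G) (_ : NormedSpace 𝕜 G)
        (_ : CompleteSpace G) (g : X →L[𝕜] G),
        Function.Injective (fun m : G =>
          Submodule.Quotient.mk
            (p := Submodule.topologicalClosure
              (LinearMap.range (LinearMap.prod g.toLinearMap (-u.toLinearMap))))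
            (m, (0 : Y))) := by
  constructor
  · rintro ⟨δ, hδ, hu⟩ G _ _ _ g
    exact (Submodule.injective_mk_inl_iff _).2 fun m hm =>
      eq_zero_of_inl_mem_pushoutSubmodule (u.isInducing_of_mul_norm_le hδ hu) hm
  · intro h
    refine exists_pos_mul_norm_le_of_forall_exists_comp_eq fun φ =>
      exists_comp_eq_of_notMem_pushoutSubmodule fun h₁ => ?_
    exact one_ne_zero ((Submodule.injective_mk_inl_iff _).1 (h 𝕜 _ _ inferInstance φ) 1 h₁)

/-- An injective continuous linear operator `u : X →L[𝕜] Y` of Banach spaces over `ℝ`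
or `ℂ` is bounded below if and only if for every Banach space `G` and continuous
linear `g : X →L[𝕜] G`, the pushout map `j : G → (G × Y) ⧸ S`, `m ↦ [(m, 0)]`
(`S` the closure of `{ (g x, -u x) | x ∈ X }`) is injective: the universal
monomorphisms in `Ban` are exactly the operators bounded below (`M_u = M_c`). -/
theorem universalMono_iff_boundedBelow_Banach {𝕜 : Type u} [RCLike 𝕜]
    {X Y : Type u} [NormedAddCommGroup X] [NormedSpace 𝕜 X] [CompleteSpace X]
    [NormedAddCommGroup Y] [NormedSpace 𝕜 Y] [CompleteSpace Y]
    (u : X →L[𝕜] Y) (hu : Function.Injective u) :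
    (∃ δ : ℝ, 0 < δ ∧ ∀ x : X, δ * ‖x‖ ≤ ‖u x‖) ↔
      ∀ (G : Type u) (_ : NormedAddCommGroup G) (_ : NormedSpace 𝕜 G)
        (_ : CompleteSpace G) (g : X →L[𝕜] G),
        Function.Injective (fun m : G =>
          Submodule.Quotient.mk
            (p := Submodule.topologicalClosure
              (LinearMap.range (LinearMap.prod g.toLinearMap (-u.toLinearMap))))
            (m, (0 : Y))) :=
  universalMono_iff_boundedBelow_Banach_general u
end

section
/- Let 𝕜 be ℝ or ℂ, let X and Y be Banach 𝕜-spaces, and let f : X →L[𝕜] Y be a continuous linear operator. Then f is surjective if and only if for every Banach 𝕜-space Z and every continuous linear map g : Z →L[𝕜] Y, the projection π : D → Z of the subspace D := { (x, z) ∈ X × Z : f x = g z } onto the second coordinate has dense range. (In other words, the universal epimorphisms in the category of Banach spaces are exactly the surjective operators, which are exactly the strict epimorphisms; P_u = P_c in Ban.) -/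
universe u

/-- A continuous linear operator `f : X →L[𝕜] Y` of Banach spaces over `ℝ` or `ℂ` is
surjective if and only if for every Banach space `Z` and continuous linear
`g : Z →L[𝕜] Y`, the projection to `Z` of the pullback
`D = { (x, z) | f x = g z }` has dense range: the universal epimorphisms in `Ban` are
exactly the surjections (`P_u = P_c`). -/
theorem universalEpi_iff_surjective_Banach {𝕜 : Type u} [RCLike 𝕜]
    {X Y : Type u} [NormedAddCommGroup X] [NormedSpace 𝕜 X] [CompleteSpace X]
    [NormedAddCommGroup Y] [NormedSpace 𝕜 Y] [CompleteSpace Y]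
    (f : X →L[𝕜] Y) :
    Function.Surjective f ↔
      ∀ (Z : Type u) (_ : NormedAddCommGroup Z) (_ : NormedSpace 𝕜 Z)
        (_ : CompleteSpace Z) (g : Z →L[𝕜] Y),
        DenseRange (fun d : { p : X × Z // f p.1 = g p.2 } => d.val.2) := by
  constructor
  · intro hf Z _ _ _ g
    apply Function.Surjective.denseRange
    intro z
    obtain ⟨x, hx⟩ := hf (g z)
    exact ⟨⟨(x, z), hx⟩, rfl⟩
  · intro h y
    have hd := h 𝕜 inferInstance inferInstance inferInstance
      (ContinuousLinearMap.toSpanSingleton 𝕜 y)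
    set S : Submodule 𝕜 𝕜 :=
      { carrier := {t : 𝕜 | ∃ x : X, f x = t • y}
        add_mem' := by
          rintro a b ⟨xa, ha⟩ ⟨xb, hb⟩
          exact ⟨xa + xb, by rw [map_add, ha, hb, add_smul]⟩
        zero_mem' := ⟨0, by simp⟩
        smul_mem' := by
          rintro c a ⟨x, hx⟩
          exact ⟨c • x, by rw [map_smul, hx, smul_smul, smul_eq_mul]⟩ } with hS
    have hrange : Set.range (fun d : { p : X × 𝕜 //
        f p.1 = ContinuousLinearMap.toSpanSingleton 𝕜 y p.2 } => d.val.2) = (S : Set 𝕜) := by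
      ext t
      constructor
      · rintro ⟨⟨⟨x, t'⟩, hx⟩, rfl⟩
        exact ⟨x, hx⟩
      · rintro ⟨x, hx⟩
        exact ⟨⟨(x, t), hx⟩, rfl⟩
    have hdense : Dense (S : Set 𝕜) := by
      rw [← hrange]; exact hd
    rcases Ideal.eq_bot_or_top (S : Ideal 𝕜) with hb | ht
    · exfalso
      have : (1 : 𝕜) ∈ closure (S : Set 𝕜) := hdense.closure_eq ▸ trivial
      rw [hb] at this
      have h0 : ((⊥ : Submodule 𝕜 𝕜) : Set 𝕜) = {0} := by
        ext; simp [Submodule.mem_bot]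
      rw [h0, closure_singleton] at this
      simp at this
    · have h1 : (1 : 𝕜) ∈ S := ht ▸ trivial
      obtain ⟨x, hx⟩ := h1
      exact ⟨x, by simpa using hx⟩
end
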